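/- Let G and H be finite graphs on the same number n of vertices, each with degree bound d and all components of size at most K. If Σ_S |c^G_S − c^H_S| < κ (sum over isomorphism classes S of connected graphs with at most K vertices), then there is a bijection ρ : V(G) → V(H) such that |ρ^{-1}(E(H)) △ E(G)| ≤ d·κ·n. -/

import Mathlib

/-- A representative of an isomorphism class of connected graphs with at most `K`
vertices. -/
structure ConnRep (K : ℕ) where
  n : ℕ
  hn : n ≤ K
  graph : SimpleGraph (Fin n)
  conn : graph.Connected

/-- The component of `v` in `G` (as an induced subgraph) is isomorphic to the
representative `p`. -/
def compClass {V : Type*} {K : ℕ} (G : SimpleGraph V) (v : V) (p : ConnRep K) : Prop :=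
  Nonempty (G.induce {w | G.Reachable v w} ≃g p.graph)

/-
Sort the components of `G` and `H` by isomorphism class and fix a representative `S.out` of each
class `S`. If `G` has `a S` components of class `S` and `H` has `b S`, numbering them embeds both
graphs as induced subgraphs of one disjoint union of copies of the representatives: `G` onto the
first `a S` copies of each `S.out`, `H` onto the first `b S`. A bijection `ρ` that is the identity
on the common part respects adjacency at every vertex of `G` mapped into it, so every edge of the
symmetric difference joins two of the remaining `∑ S, (a S - b S) * |S| ≤ n * ∑ S, |c^G_S - c^H_S|`
vertices. These have degree at most `2 * d` in the symmetric difference, so by the handshake lemma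
it has at most `d` times as many edges as there are such vertices.
-/

lemma Nat.cast_sub_le_mul_abs_div_sub {x y n : ℕ} (hx : x ≤ n) :
    ((x - y : ℕ) : ℝ) ≤ n * |(x : ℝ) / n - y / n| := by
  rcases n.eq_zero_or_pos with rfl | hn
  · simp [Nat.le_zero.mp hx]
  have hn : (0 : ℝ) < n := Nat.cast_pos.mpr hn
  have hxy : (x : ℝ) - y = n * (x / n - y / n) := by field_simp
  calc ((x - y : ℕ) : ℝ) ≤ |(x : ℝ) - y| := by
        rcases le_total y x with h | h
        · rw [Nat.cast_sub h]
          exact le_abs_self _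
        · rw [Nat.sub_eq_zero_of_le h, Nat.cast_zero]
          exact abs_nonneg _
    _ = n * |(x : ℝ) / n - y / n| := by rw [hxy, abs_mul, abs_of_pos hn]

lemma Equiv.exists_apply_eq_of_injective {V W T : Type*} [Fintype V] [Fintype W]
    (hcard : Fintype.card V = Fintype.card W) {f : V → T} {g : W → T} (hf : f.Injective)
    (hg : g.Injective) : ∃ ρ : V ≃ W, ∀ v, f v ∈ Set.range g → g (ρ v) = f v := by
  classical
  have hmaps : Set.MapsTo f {v | f v ∈ Set.range g} ((Set.range g).toFinset : Finset T) :=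
    fun _ hv => by simpa using hv
  obtain ⟨ρ, hρ⟩ := hmaps.exists_equiv_extend_of_card_eq
    (by rw [Set.toFinset_card, Set.card_range_of_injective hg, hcard]) hf.injOn
  refine ⟨ρ.trans ((Equiv.subtypeEquivRight fun _ => Set.mem_toFinset).trans
    (Equiv.ofInjective g hg).symm), fun v hv => ?_⟩
  simp only [Equiv.trans_apply, Equiv.apply_ofInjective_symm, Equiv.subtypeEquivRight_apply_coe]
  exact hρ v hv

namespace SimpleGraph

open Finset

variable {V W : Type*}

lemma degree_eq_ncard_neighborSet [Fintype V] (G : SimpleGraph V) [DecidableRel G.Adj]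
    (v : V) : G.degree v = (G.neighborSet v).ncard := by
  rw [← card_neighborSet_eq_degree, Set.ncard_eq_toFinset_card', Set.toFinset_card]

lemma two_mul_card_edgeFinset_le [Fintype V] (G : SimpleGraph V) [DecidableRel G.Adj]
    {s : Finset V} {D : ℕ} (hdeg : ∀ v, G.degree v ≤ D) (hs : ∀ u v, G.Adj u v → u ∈ s) :
    2 * #G.edgeFinset ≤ D * #s := by
  have hzero : ∀ v ∉ s, G.degree v = 0 := fun v hv =>
    Finset.card_eq_zero.mpr <| Finset.eq_empty_of_forall_notMem fun w hw =>
      hv (hs v w ((mem_neighborFinset G v w).mp hw))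
  calc 2 * #G.edgeFinset = ∑ v, G.degree v := (sum_degrees_eq_twice_card_edges G).symm
    _ = ∑ v ∈ s, G.degree v := (sum_subset (subset_univ s) fun v _ hv => hzero v hv).symm
    _ ≤ ∑ _v ∈ s, D := sum_le_sum fun v _ => hdeg v
    _ = D * #s := by rw [sum_const, smul_eq_mul, mul_comm]

lemma edgeSet_symmDiff (G₁ G₂ : SimpleGraph V) :
    (symmDiff G₁ G₂).edgeSet = symmDiff G₁.edgeSet G₂.edgeSet := by
  rw [symmDiff_def, symmDiff_def, edgeSet_sup, edgeSet_sdiff, edgeSet_sdiff]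
  rfl

lemma setOf_map_mem_edgeSet (H : SimpleGraph W) (f : V → W) :
    {e : Sym2 V | e.map f ∈ H.edgeSet} = (H.comap f).edgeSet := by
  ext e
  induction e using Sym2.ind
  rfl

theorem ncard_symmDiff_edgeSet_le [Finite V] (G : SimpleGraph V) (H : SimpleGraph W)
    (ρ : V ≃ W) {d : ℕ} (hdG : ∀ v, (G.neighborSet v).ncard ≤ d)
    (hdH : ∀ w, (H.neighborSet w).ncard ≤ d) (s : Set V)
    (hs : ∀ u ∉ s, ∀ v, G.Adj u v ↔ H.Adj (ρ u) (ρ v)) :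
    (symmDiff {e : Sym2 V | e.map ρ ∈ H.edgeSet} G.edgeSet).ncard ≤ d * s.ncard := by
  classical
  have : Fintype V := Fintype.ofFinite V
  rw [Set.ncard_eq_toFinset_card' s]
  set D := symmDiff (H.comap ρ) G
  have hD : ∀ u v, D.Adj u v ↔ ¬(G.Adj u v ↔ H.Adj (ρ u) (ρ v)) := by
    intro u v
    simp only [D, symmDiff_def, sup_adj, sdiff_adj, comap_adj]
    tauto
  have hdeg : ∀ u, D.degree u ≤ 2 * d := by
    intro u
    have hsub : D.neighborSet u ⊆ G.neighborSet u ∪ ρ.symm '' H.neighborSet (ρ u) := by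
      intro v hv
      rw [mem_neighborSet, hD] at hv
      by_cases h : G.Adj u v
      · exact Or.inl h
      · exact Or.inr ⟨ρ v, by simp_all, ρ.symm_apply_apply v⟩
    rw [degree_eq_ncard_neighborSet, two_mul]
    calc (D.neighborSet u).ncard
        ≤ (G.neighborSet u ∪ ρ.symm '' H.neighborSet (ρ u)).ncard := Set.ncard_le_ncard hsub
      _ ≤ (G.neighborSet u).ncard + (ρ.symm '' H.neighborSet (ρ u)).ncard :=
          Set.ncard_union_le _ _
      _ ≤ d + d := by
          rw [Set.ncard_image_of_injective _ ρ.symm.injective]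
          exact add_le_add (hdG u) (hdH (ρ u))
  have hedges := D.two_mul_card_edgeFinset_le (s := s.toFinset) hdeg fun u v huv => by
    by_contra hu
    exact (hD u v).mp huv (hs u (by simpa using hu) v)
  rw [setOf_map_mem_edgeSet, ← edgeSet_symmDiff, ← coe_edgeFinset, Set.ncard_coe_finset]
  linarith

theorem exists_equiv_adj_iff_of_embedding [Fintype V] [Fintype W] {T : Type*}
    {G : SimpleGraph V} {H : SimpleGraph W} {U : SimpleGraph T} (f : G ↪g U) (g : H ↪g U)
    (hcard : Fintype.card V = Fintype.card W)
    (hf : ∀ x y, U.Adj x y → x ∈ Set.range f → y ∈ Set.range f)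
    (hg : ∀ x y, U.Adj x y → x ∈ Set.range g → y ∈ Set.range g) :
    ∃ ρ : V ≃ W, ∀ u, f u ∈ Set.range g → ∀ v, G.Adj u v ↔ H.Adj (ρ u) (ρ v) := by
  obtain ⟨ρ, hρ⟩ := Equiv.exists_apply_eq_of_injective hcard f.injective g.injective
  refine ⟨ρ, fun u hu v => ?_⟩
  rw [← f.map_adj_iff, ← g.map_adj_iff, hρ u hu]
  by_cases hv : f v ∈ Set.range g
  · rw [hρ v hv]
  · have hρv : g (ρ v) ∉ Set.range f := by
      rintro ⟨w, hw⟩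
      by_cases hw' : f w ∈ Set.range g
      · exact hv (ρ.injective (g.injective ((hρ w hw').trans hw)) ▸ hw')
      · exact hw' (hw ▸ Set.mem_range_self _)
    exact iff_of_false (fun h => hv (hg _ _ h hu)) fun h => hρv (hf _ _ h ⟨u, rfl⟩)

lemma supp_connectedComponentMk {V : Type*} {G : SimpleGraph V} (v : V) :
    (G.connectedComponentMk v).supp = {w | G.Reachable v w} := by
  ext w
  exact ConnectedComponent.eq.trans ⟨Reachable.symm, Reachable.symm⟩

lemma natCard_supp_le {V : Type*} {G : SimpleGraph V} {K : ℕ}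
    (hK : ∀ v, {w | G.Reachable v w}.ncard ≤ K) (c : G.ConnectedComponent) :
    Nat.card c.supp ≤ K := by
  induction c using ConnectedComponent.ind with
  | h v => rw [Nat.card_coe_set_eq, supp_connectedComponentMk]; exact hK v

end SimpleGraph

namespace ConnRep

variable {K : ℕ}

abbrev IsIso (K : ℕ) (p q : ConnRep K) : Prop := Nonempty (p.graph ≃g q.graph)

abbrev IsoClass (K : ℕ) := Quot (IsIso K)

lemma isIso_equivalence : Equivalence (IsIso K) :=
  ⟨fun _ => ⟨SimpleGraph.Iso.refl⟩, fun ⟨e⟩ => ⟨e.symm⟩, fun ⟨e⟩ ⟨e'⟩ => ⟨e.trans e'⟩⟩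

lemma mk_eq_mk_iff {p q : ConnRep K} : Quot.mk (IsIso K) p = Quot.mk _ q ↔ IsIso K p q :=
  Quot.eq.trans isIso_equivalence.eqvGen_iff

lemma isIso_out (p : ConnRep K) : IsIso K p (Quot.mk (IsIso K) p).out :=
  mk_eq_mk_iff.mp (Quot.out_eq _).symm

instance : Finite (ConnRep K) := by
  refine Finite.of_injective (β := Σ n : Fin (K + 1), SimpleGraph (Fin n))
    (fun p => ⟨⟨p.n, Nat.lt_succ_of_le p.hn⟩, p.graph⟩) ?_
  rintro ⟨n, hn, G, hG⟩ ⟨n', hn', G', hG'⟩ h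
  obtain ⟨hnn', hGG'⟩ := Sigma.mk.inj_iff.mp h
  obtain rfl : n = n' := congrArg Fin.val hnn'
  cases eq_of_heq hGG'
  rfl

/-- The disjoint union of countably many copies of every representative: `(S, i, k)` is vertex
`k` of copy `i` of `S.out`. Vertices with `k ≥ S.out.n` are isolated. -/
def unionGraph (K : ℕ) : SimpleGraph (IsoClass K × ℕ × ℕ) where
  Adj x y := x.1 = y.1 ∧ x.2.1 = y.2.1 ∧ (x.1.out.graph.map Fin.valEmbedding).Adj x.2.2 y.2.2
  symm := ⟨by
    rintro ⟨S, i, k⟩ ⟨S', i', k'⟩ ⟨rfl, rfl, h⟩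
    exact ⟨rfl, rfl, h.symm⟩⟩
  loopless := ⟨fun x h => h.2.2.ne rfl⟩

lemma unionGraph_adj_mk {S : IsoClass K} {i : ℕ} {a b : Fin S.out.n} :
    (unionGraph K).Adj (S, i, a) (S, i, b) ↔ S.out.graph.Adj a b := by
  show _ ∧ _ ∧ _ ↔ _
  simp only [true_and]
  exact SimpleGraph.map_adj_apply

def firstCopies (a : IsoClass K → ℕ) : Set (IsoClass K × ℕ × ℕ) :=
  {x | x.2.1 < a x.1 ∧ x.2.2 < x.1.out.n}

lemma mem_firstCopies_of_adj (a : IsoClass K → ℕ) {x y : IsoClass K × ℕ × ℕ}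
    (hxy : (unionGraph K).Adj x y) (hx : x ∈ firstCopies a) : y ∈ firstCopies a := by
  obtain ⟨S, i, k⟩ := x
  obtain ⟨S', i', k'⟩ := y
  obtain ⟨rfl, rfl, -, -, b, -, -, rfl⟩ := hxy
  exact ⟨hx.1, b.isLt⟩

lemma firstCopies_inter_eq_prod (a : IsoClass K → ℕ) (S : IsoClass K) (m : ℕ) :
    firstCopies a ∩ {x | x.1 = S ∧ m ≤ x.2.1} = {S} ×ˢ Set.Ico m (a S) ×ˢ Set.Iio S.out.n := by
  ext ⟨S', i, k⟩
  simp only [firstCopies, Set.mem_inter_iff, Set.mem_ofPred_eq, Set.mem_prod,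
    Set.mem_singleton_iff, Set.mem_Ico, Set.mem_Iio]
  constructor
  · rintro ⟨⟨hi, hk⟩, rfl, hm⟩
    exact ⟨rfl, ⟨hm, hi⟩, hk⟩
  · rintro ⟨rfl, ⟨hm, hi⟩, hk⟩
    exact ⟨⟨hi, hk⟩, rfl, hm⟩

lemma ncard_setOf_fst_eq_le_snd {V : Type*} {f : V → IsoClass K × ℕ × ℕ} (hf : f.Injective)
    {a : IsoClass K → ℕ} (hrange : Set.range f = firstCopies a) (S : IsoClass K) (m : ℕ) :
    {v | (f v).1 = S ∧ m ≤ (f v).2.1}.ncard = (a S - m) * S.out.n := by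
  rw [← Set.ncard_image_of_injective _ hf]
  change (f '' (f ⁻¹' {x | x.1 = S ∧ m ≤ x.2.1})).ncard = _
  rw [Set.image_preimage_eq_range_inter, hrange, firstCopies_inter_eq_prod, Set.ncard_prod,
    Set.ncard_prod, Set.ncard_singleton, Set.ncard_Ico_nat, Set.ncard_Iio_nat, one_mul]

lemma ncard_setOf_notMem_range_le {V W : Type*} [Finite V] [Fintype (IsoClass K)]
    {f : V → IsoClass K × ℕ × ℕ} {g : W → IsoClass K × ℕ × ℕ} (hf : f.Injective)
    {a b : IsoClass K → ℕ} (hrf : Set.range f = firstCopies a)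
    (hrg : Set.range g = firstCopies b) :
    {v | f v ∉ Set.range g}.ncard ≤ ∑ S, (a S - b S) * S.out.n := by
  have hsub : {v | f v ∉ Set.range g} ⊆ ⋃ S, {v | (f v).1 = S ∧ b S ≤ (f v).2.1} := by
    intro v hv
    have hk : (f v).2.2 < (f v).1.out.n :=
      (hrf ▸ Set.mem_range_self v : f v ∈ firstCopies a).2
    rw [Set.mem_ofPred_eq, hrg, firstCopies, Set.mem_ofPred_eq] at hv
    exact Set.mem_iUnion.mpr ⟨(f v).1, rfl, by omega⟩
  calc {v | f v ∉ Set.range g}.ncard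
      ≤ (⋃ S, {v | (f v).1 = S ∧ b S ≤ (f v).2.1}).ncard := Set.ncard_le_ncard hsub
    _ ≤ ∑ S, {v | (f v).1 = S ∧ b S ≤ (f v).2.1}.ncard := Set.ncard_iUnion_le_of_fintype _
    _ = ∑ S, (a S - b S) * S.out.n :=
        Finset.sum_congr rfl fun S _ => ncard_setOf_fst_eq_le_snd hf hrf S (b S)

lemma ncard_setOf_fst_eq {V : Type*} {f : V → IsoClass K × ℕ × ℕ} (hf : f.Injective)
    {a : IsoClass K → ℕ} (hrange : Set.range f = firstCopies a) (S : IsoClass K) :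
    {v | (f v).1 = S}.ncard = a S * S.out.n := by
  simpa using ncard_setOf_fst_eq_le_snd hf hrange S 0

end ConnRep

namespace SimpleGraph

open ConnRep

variable {V : Type*} [Finite V] {G : SimpleGraph V} {K : ℕ}

namespace ConnectedComponent

noncomputable def toConnRep (c : G.ConnectedComponent) (hc : Nat.card c.supp ≤ K) :
    ConnRep K where
  n := Nat.card c.supp
  hn := hc
  graph := (G.induce c.supp).comap (Finite.equivFin c.supp).symm.toEmbedding
  conn := (Iso.comap _ _).connected_iff.mpr c.connected_toSimpleGraph

noncomputable def isoToConnRep (c : G.ConnectedComponent) (hc : Nat.card c.supp ≤ K) :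
    G.induce c.supp ≃g (c.toConnRep hc).graph :=
  (Iso.comap _ _).symm

variable (hK : ∀ c : G.ConnectedComponent, Nat.card c.supp ≤ K)

noncomputable def isoClass (c : G.ConnectedComponent) : IsoClass K :=
  Quot.mk _ (c.toConnRep (hK c))

/-- An isomorphism onto the chosen representative of the class of `c`; this choice is what
makes the coordinates of `G` and of `H` comparable. -/
noncomputable def isoOut (c : G.ConnectedComponent) :
    G.induce c.supp ≃g (c.isoClass hK).out.graph :=
  (c.isoToConnRep (hK c)).trans (isIso_out _).some

noncomputable def index (c : G.ConnectedComponent) : ℕ :=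
  Finite.equivFin {c' : G.ConnectedComponent // c'.isoClass hK = c.isoClass hK} ⟨c, rfl⟩

end ConnectedComponent

open ConnectedComponent

variable (G) in
noncomputable def classCount (hK : ∀ c : G.ConnectedComponent, Nat.card c.supp ≤ K)
    (S : IsoClass K) : ℕ :=
  Nat.card {c : G.ConnectedComponent // c.isoClass hK = S}

variable (hK : ∀ c : G.ConnectedComponent, Nat.card c.supp ≤ K)

namespace ConnectedComponent

lemma index_eq {c : G.ConnectedComponent} {S : IsoClass K} (h : c.isoClass hK = S) :
    c.index hK =
      (Finite.equivFin {c' : G.ConnectedComponent // c'.isoClass hK = S} ⟨c, h⟩ :) := by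
  subst h
  rfl

lemma index_lt (c : G.ConnectedComponent) : c.index hK < classCount G hK (c.isoClass hK) :=
  Fin.isLt _

lemma eq_of_isoClass_eq_of_index_eq {c c' : G.ConnectedComponent}
    (h : c.isoClass hK = c'.isoClass hK) (h' : c.index hK = c'.index hK) : c = c' := by
  rw [index_eq hK h, index_eq hK rfl] at h'
  exact congrArg Subtype.val ((Finite.equivFin _).injective (Fin.val_injective h'))

lemma exists_isoClass_eq_index_eq {S : IsoClass K} {i : ℕ} (hi : i < classCount G hK S) :
    ∃ c : G.ConnectedComponent, c.isoClass hK = S ∧ c.index hK = i := by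
  set c := (Finite.equivFin {c : G.ConnectedComponent // c.isoClass hK = S}).symm ⟨i, hi⟩
  refine ⟨c, c.2, ?_⟩
  rw [index_eq hK c.2, Subtype.coe_eta, Equiv.apply_symm_apply]

end ConnectedComponent

variable (G) in
/-- The vertex `v` sits at `(S, i, k)` of `ConnRep.unionGraph K`: its component is the `i`-th one
of class `S`, and `isoOut` sends `v` to vertex `k` of `S.out`. -/
noncomputable def coord (hK : ∀ c : G.ConnectedComponent, Nat.card c.supp ≤ K) (v : V) :
    IsoClass K × ℕ × ℕ :=
  let c := G.connectedComponentMk v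
  (c.isoClass hK, c.index hK, c.isoOut hK ⟨v, rfl⟩)

lemma coord_of_mem_supp {c : G.ConnectedComponent} {v : V} (hv : v ∈ c.supp) :
    G.coord hK v = (c.isoClass hK, c.index hK, (c.isoOut hK ⟨v, hv⟩ : ℕ)) := by
  obtain rfl : G.connectedComponentMk v = c := hv
  rfl

lemma connectedComponentMk_eq_of_coord {u v : V}
    (h : (G.coord hK u).1 = (G.coord hK v).1 ∧ (G.coord hK u).2.1 = (G.coord hK v).2.1) :
    G.connectedComponentMk u = G.connectedComponentMk v :=
  eq_of_isoClass_eq_of_index_eq hK h.1 h.2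

lemma coord_injective : (G.coord hK).Injective := by
  intro u v h
  have hc := connectedComponentMk_eq_of_coord hK ⟨congrArg (·.1) h, congrArg (·.2.1) h⟩
  have hv : v ∈ (G.connectedComponentMk u).supp := hc.symm
  rw [coord_of_mem_supp hK (c := G.connectedComponentMk u) rfl, coord_of_mem_supp hK hv] at h
  exact congrArg Subtype.val
    ((isoOut hK _).injective (Fin.val_injective (Prod.ext_iff.mp (Prod.ext_iff.mp h).2).2))

lemma unionGraph_adj_coord_iff (u v : V) :
    (unionGraph K).Adj (G.coord hK u) (G.coord hK v) ↔ G.Adj u v := by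
  suffices h : G.connectedComponentMk u = G.connectedComponentMk v →
      ((unionGraph K).Adj (G.coord hK u) (G.coord hK v) ↔ G.Adj u v) from
    ⟨fun hadj => (h (connectedComponentMk_eq_of_coord hK ⟨hadj.1, hadj.2.1⟩)).mp hadj,
      fun hadj => (h (ConnectedComponent.sound hadj.reachable)).mpr hadj⟩
  intro hc
  have hv : v ∈ (G.connectedComponentMk u).supp := hc.symm
  rw [coord_of_mem_supp hK (c := G.connectedComponentMk u) rfl, coord_of_mem_supp hK hv,
    unionGraph_adj_mk, (isoOut hK _).map_adj_iff, comap_adj]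
  rfl

noncomputable def coordEmbedding : G ↪g unionGraph K where
  toFun := G.coord hK
  inj' := coord_injective hK
  map_rel_iff' := unionGraph_adj_coord_iff hK _ _

lemma range_coord : Set.range (G.coord hK) = firstCopies (classCount G hK) := by
  ext ⟨S, i, k⟩
  refine ⟨?_, fun ⟨hi, hk⟩ => ?_⟩
  · rintro ⟨v, hv⟩
    rw [← hv]
    exact ⟨index_lt hK _, Fin.isLt _⟩
  · obtain ⟨c, rfl, rfl⟩ := exists_isoClass_eq_index_eq hK hi
    set w := (c.isoOut hK).symm ⟨k, hk⟩
    refine ⟨w, ?_⟩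
    rw [coord_of_mem_supp hK w.2, Subtype.coe_eta, RelIso.apply_symm_apply]

lemma mem_range_coordEmbedding_of_adj {x y : IsoClass K × ℕ × ℕ}
    (hxy : (unionGraph K).Adj x y) (hx : x ∈ Set.range (coordEmbedding hK)) :
    y ∈ Set.range (coordEmbedding hK) := by
  change x ∈ Set.range (G.coord hK) at hx
  change y ∈ Set.range (G.coord hK)
  rw [range_coord] at hx ⊢
  exact mem_firstCopies_of_adj _ hxy hx

lemma setOf_compClass_eq (S : IsoClass K) :
    {v | ∃ p : ConnRep K, Quot.mk _ p = S ∧ compClass G v p} =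
      {v | (G.coord hK v).1 = S} := by
  ext v
  simp only [Set.mem_ofPred_eq, compClass]
  rw [← supp_connectedComponentMk]
  constructor
  · rintro ⟨p, rfl, ⟨e⟩⟩
    exact Quot.sound ⟨(ConnectedComponent.isoToConnRep _ _).symm.trans e⟩
  · rintro rfl
    exact ⟨_, Quot.out_eq _, ⟨ConnectedComponent.isoOut hK _⟩⟩

lemma ncard_setOf_compClass (S : IsoClass K) :
    {v | ∃ p : ConnRep K, Quot.mk _ p = S ∧ compClass G v p}.ncard =
      G.classCount hK S * S.out.n := by
  rw [setOf_compClass_eq hK, ncard_setOf_fst_eq (coord_injective hK) (range_coord hK)]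

lemma ncard_setOf_coord_notMem_range_le {W : Type*} [Finite W] {H : SimpleGraph W}
    [Fintype (IsoClass K)] (hH : ∀ c : H.ConnectedComponent, Nat.card c.supp ≤ K) :
    {v | G.coord hK v ∉ Set.range (H.coord hH)}.ncard ≤
      ∑ S : IsoClass K, ({v | ∃ p : ConnRep K, Quot.mk _ p = S ∧ compClass G v p}.ncard -
        {w | ∃ p : ConnRep K, Quot.mk _ p = S ∧ compClass H w p}.ncard) := by
  simp only [ncard_setOf_compClass hK, ncard_setOf_compClass hH, ← Nat.sub_mul]
  exact ncard_setOf_notMem_range_le (coord_injective hK) (range_coord hK) (range_coord hH)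

end SimpleGraph

open ConnRep SimpleGraph in
/-- If `G`, `H` are finite graphs on `n` vertices with degree bound `d`, all
components of size at most `K`, and `Σ_S |c^G_S − c^H_S| < κ` (sum over isomorphism
classes of connected graphs with at most `K` vertices), then there is a bijection
`ρ : V(G) → V(H)` with `|ρ^{-1}(E(H)) △ E(G)| ≤ d·κ·n`. -/
theorem stmt_3 {V W : Type*} [Fintype V] [Fintype W] (G : SimpleGraph V)
    (H : SimpleGraph W) (d K n : ℕ)
    (hn : Fintype.card V = n) (hn' : Fintype.card W = n)
    (hdG : ∀ v, (G.neighborSet v).ncard ≤ d) (hdH : ∀ w, (H.neighborSet w).ncard ≤ d)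
    (hKG : ∀ v, {w | G.Reachable v w}.ncard ≤ K)
    (hKH : ∀ v, {w | H.Reachable v w}.ncard ≤ K)
    (κ : ℝ)
    (hκ : ∑ᶠ S : Quot (fun p q : ConnRep K => Nonempty (p.graph ≃g q.graph)),
      |({v : V | ∃ p : ConnRep K, Quot.mk _ p = S ∧ compClass G v p}.ncard : ℝ) / n -
        ({w : W | ∃ p : ConnRep K, Quot.mk _ p = S ∧ compClass H w p}.ncard : ℝ) / n|
      < κ) :
    ∃ ρ : V ≃ W,
      ((symmDiff {e : Sym2 V | e.map ρ ∈ H.edgeSet} G.edgeSet).ncard : ℝ)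
        ≤ d * κ * n := by
  classical
  have := Fintype.ofFinite (IsoClass K)
  have hG := natCard_supp_le hKG
  have hH := natCard_supp_le hKH
  obtain ⟨ρ, hρ⟩ := exists_equiv_adj_iff_of_embedding (coordEmbedding hG) (coordEmbedding hH)
    (hn.trans hn'.symm) (fun _ _ => mem_range_coordEmbedding_of_adj hG)
    (fun _ _ => mem_range_coordEmbedding_of_adj hH)
  refine ⟨ρ, ?_⟩
  have hedges := ncard_symmDiff_edgeSet_le G H ρ hdG hdH
    {v | G.coord hG v ∉ Set.range (H.coord hH)} fun u hu => hρ u (not_not.mp hu)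
  have hbad := ncard_setOf_coord_notMem_range_le hG hH
  refine (Nat.cast_le.mpr (hedges.trans (Nat.mul_le_mul_left d hbad))).trans ?_
  push_cast
  rw [mul_assoc]
  gcongr
  refine (Finset.sum_le_sum fun S _ => Nat.cast_sub_le_mul_abs_div_sub
    ((Set.ncard_le_card _).trans_eq (Nat.card_eq_fintype_card.trans hn))).trans ?_
  rw [← Finset.mul_sum, mul_comm κ, ← finsum_eq_sum_of_fintype]
  exact mul_le_mul_of_nonneg_left hκ.le (Nat.cast_nonneg n)
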